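/- (Inquisitive Ehrenfeucht–Fraïssé theorem) Let P be a finite set of atomic propositions. For every n ∈ ℕ and all state-pointed inquisitive modal models M,s and M',s' over P: M,s ~^n M',s' if and only if M,s and M',s' support exactly the same InqML formulas of modal depth at most n (i.e., for every φ of modal depth ≤ n, M,s ⊨ φ iff M',s' ⊨ φ). -/
import Mathlib


/-- Formulas of inquisitive modal logic InqML over atomic propositions `P`. -/
inductive InqForm (P : Type) : Type
  | atom : P → InqForm P
  | bot : InqForm P
  | and : InqForm P → InqForm P → InqForm P
  | impl : InqForm P → InqForm P → InqForm P
  | idisj : InqForm P → InqForm P → InqForm P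
  | box : InqForm P → InqForm P
  | boxplus : InqForm P → InqForm P

/-- An inquisitive modal model `M = ⟨W, Σ, V⟩`. -/
structure InqModel (P : Type) where
  W : Type
  Sig : W → Set (Set W)
  Sig_nonempty : ∀ w, (Sig w).Nonempty
  Sig_downward : ∀ w, ∀ s ∈ Sig w, ∀ t ⊆ s, t ∈ Sig w
  V : P → Set W

/-- `σ(w) = ⋃ Σ(w)`. -/
def InqModel.sigma {P : Type} (M : InqModel P) (w : M.W) : Set M.W :=
  ⋃₀ M.Sig w

/-- Support of a formula at an information state `s ⊆ W`. -/
def support {P : Type} (M : InqModel P) : InqForm P → Set M.W → Prop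
  | .atom p, s => s ⊆ M.V p
  | .bot, s => s = ∅
  | .and φ ψ, s => support M φ s ∧ support M ψ s
  | .impl φ ψ, s => ∀ t ⊆ s, support M φ t → support M ψ t
  | .idisj φ ψ, s => support M φ s ∨ support M ψ s
  | .box φ, s => ∀ w ∈ s, support M φ (M.sigma w)
  | .boxplus φ, s => ∀ w ∈ s, ∀ t ∈ M.Sig w, support M φ t

/-- Truth at a world: `M,w ⊨ φ` iff `M,{w} ⊨ φ`. -/
def truth {P : Type} (M : InqModel P) (w : M.W) (φ : InqForm P) : Prop :=
  support M φ {w}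

/-- Modal depth: maximal nesting depth of `□` and `⊞`. -/
def mdepth {P : Type} : InqForm P → ℕ
  | .atom _ => 0
  | .bot => 0
  | .and φ ψ => max (mdepth φ) (mdepth ψ)
  | .impl φ ψ => max (mdepth φ) (mdepth ψ)
  | .idisj φ ψ => max (mdepth φ) (mdepth ψ)
  | .box φ => mdepth φ + 1
  | .boxplus φ => mdepth φ + 1

/-- Lift of a relation between worlds to sets of worlds: every world on either
side is related to some world on the other side. -/
def StateRel {W W' : Type} (Z : W → W' → Prop) (s : Set W) (s' : Set W') : Prop :=
  (∀ w ∈ s, ∃ w' ∈ s', Z w w') ∧ (∀ w' ∈ s', ∃ w ∈ s, Z w w')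

/-- `n`-bisimilarity between worlds of two inquisitive modal models. -/
def NBisimW {P : Type} (M M' : InqModel P) : ℕ → M.W → M'.W → Prop
  | 0, w, w' => ∀ p : P, w ∈ M.V p ↔ w' ∈ M'.V p
  | n + 1, w, w' => (∀ p : P, w ∈ M.V p ↔ w' ∈ M'.V p) ∧
      (∀ s ∈ M.Sig w, ∃ s' ∈ M'.Sig w', StateRel (NBisimW M M' n) s s') ∧
      (∀ s' ∈ M'.Sig w', ∃ s ∈ M.Sig w, StateRel (NBisimW M M' n) s s')

/-- `n`-bisimilarity between information states. -/
def NBisimS {P : Type} (M M' : InqModel P) (n : ℕ) (s : Set M.W) (s' : Set M'.W) : Prop :=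
  StateRel (NBisimW M M' n) s s'

/-- `Z` is a bisimulation between two inquisitive modal models. -/
def IsBisimulation {P : Type} (M M' : InqModel P) (Z : M.W → M'.W → Prop) : Prop :=
  ∀ w w', Z w w' →
    (∀ p : P, w ∈ M.V p ↔ w' ∈ M'.V p) ∧
    (∀ s ∈ M.Sig w, ∃ s' ∈ M'.Sig w', StateRel Z s s') ∧
    (∀ s' ∈ M'.Sig w', ∃ s ∈ M.Sig w, StateRel Z s s')

/-- Bisimilarity of worlds: inclusion in some bisimulation. -/
def BisimW {P : Type} (M M' : InqModel P) (w : M.W) (w' : M'.W) : Prop :=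
  ∃ Z, IsBisimulation M M' Z ∧ Z w w'

/-- Bisimilarity of information states. -/
def BisimS {P : Type} (M M' : InqModel P) (s : Set M.W) (s' : Set M'.W) : Prop :=
  StateRel (BisimW M M') s s'

section Aux
variable {P : Type}

lemma support_empty (M : InqModel P) (φ : InqForm P) : support M φ (∅ : Set M.W) := by
  induction φ with
  | atom p => simp [support]
  | bot => simp [support]
  | and φ ψ ihφ ihψ => exact ⟨ihφ, ihψ⟩
  | impl φ ψ ihφ ihψ => intro t ht _; rw [Set.subset_empty_iff] at ht; subst ht; exact ihψ
  | idisj φ ψ ihφ ihψ => exact Or.inl ihφ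
  | box φ ih => intro w hw; exact absurd hw (Set.notMem_empty w)
  | boxplus φ ih => intro w hw; exact absurd hw (Set.notMem_empty w)

lemma support_mono (M : InqModel P) {φ : InqForm P} {s t : Set M.W}
    (h : support M φ s) (hts : t ⊆ s) : support M φ t := by
  induction φ generalizing s t with
  | atom p => exact hts.trans h
  | bot => rw [h] at hts; exact Set.subset_empty_iff.mp hts
  | and φ ψ ihφ ihψ => exact ⟨ihφ h.1 hts, ihψ h.2 hts⟩
  | impl φ ψ ihφ ihψ => intro u hu hφ; exact h u (hu.trans hts) hφ
  | idisj φ ψ ihφ ihψ => exact h.imp (fun h => ihφ h hts) (fun h => ihψ h hts)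
  | box φ ih => intro w hw; exact h w (hts hw)
  | boxplus φ ih => intro w hw; exact h w (hts hw)

/-- Negation. -/
def InqForm.neg (φ : InqForm P) : InqForm P := .impl φ .bot

/-- Truth-formula. -/
def InqForm.top : InqForm P := .impl .bot .bot

lemma mdepth_neg (φ : InqForm P) : mdepth φ.neg = mdepth φ := by
  simp [InqForm.neg, mdepth]

lemma support_top (M : InqModel P) (s : Set M.W) : support M InqForm.top s := by
  intro t _ h; exact h

lemma support_neg (M : InqModel P) (ψ : InqForm P) (s : Set M.W) :
    support M ψ.neg s ↔ ∀ w ∈ s, ¬ support M ψ {w} := by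
  constructor
  · intro h w hw hψ
    exact (Set.singleton_ne_empty w) (h {w} (Set.singleton_subset_iff.mpr hw) hψ)
  · intro h t hts hψ
    by_contra hne
    obtain ⟨w, hw⟩ := Set.nonempty_iff_ne_empty.mpr hne
    exact h w (hts hw) (support_mono M hψ (Set.singleton_subset_iff.mpr hw))

/-- Finite conjunction. -/
def landList : List (InqForm P) → InqForm P
  | [] => .top
  | φ :: L => .and φ (landList L)

lemma support_landList (M : InqModel P) (L : List (InqForm P)) (s : Set M.W) :
    support M (landList L) s ↔ ∀ φ ∈ L, support M φ s := by
  induction L with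
  | nil => simp [landList, support_top]
  | cons φ L ih =>
    show support M φ s ∧ support M (landList L) s ↔ _
    simp [ih]

lemma mdepth_landList {L : List (InqForm P)} {n : ℕ} (h : ∀ φ ∈ L, mdepth φ ≤ n) :
    mdepth (landList L) ≤ n := by
  induction L with
  | nil => simp [landList, InqForm.top, mdepth]
  | cons φ L ih =>
    show max (mdepth φ) (mdepth (landList L)) ≤ n
    exact max_le (h φ (by simp)) (ih fun ψ hψ => h ψ (by simp [hψ]))

/-- Finite inquisitive disjunction. -/
def lorList : List (InqForm P) → InqForm P
  | [] => .bot
  | φ :: L => .idisj φ (lorList L)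

lemma support_lorList (M : InqModel P) (L : List (InqForm P)) (s : Set M.W) :
    support M (lorList L) s ↔ s = ∅ ∨ ∃ φ ∈ L, support M φ s := by
  induction L with
  | nil => simp [lorList, support]
  | cons φ L ih =>
    show support M φ s ∨ support M (lorList L) s ↔ _
    rw [ih]
    constructor
    · rintro (h | h | h)
      · exact Or.inr ⟨φ, by simp, h⟩
      · exact Or.inl h
      · obtain ⟨ψ, hψ, h⟩ := h; exact Or.inr ⟨ψ, by simp [hψ], h⟩
    · rintro (h | ⟨ψ, hψ, h⟩)
      · exact Or.inr (Or.inl h)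
      · rcases List.mem_cons.mp hψ with rfl | hψ
        · exact Or.inl h
        · exact Or.inr (Or.inr ⟨ψ, hψ, h⟩)

lemma mdepth_lorList {L : List (InqForm P)} {n : ℕ} (h : ∀ φ ∈ L, mdepth φ ≤ n) :
    mdepth (lorList L) ≤ n := by
  induction L with
  | nil => simp [lorList, mdepth]
  | cons φ L ih =>
    show max (mdepth φ) (mdepth (lorList L)) ≤ n
    exact max_le (h φ (by simp)) (ih fun ψ hψ => h ψ (by simp [hψ]))

end Aux
section Classes
variable {P : Type}

/-- Abstract class values for `n`-bisimulation types. -/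
def ClassT (P : Type) : ℕ → Type
  | 0 => P → Prop
  | n + 1 => (P → Prop) × Set (Set (ClassT P (n)))

instance ClassT.finite [Finite P] : ∀ n, Finite (ClassT P n)
  | 0 => by unfold ClassT; infer_instance
  | n + 1 => by
    have : Finite (ClassT P n) := ClassT.finite n
    unfold ClassT; infer_instance

/-- The `n`-class of a world. -/
def cW (M : InqModel P) : (n : ℕ) → M.W → ClassT P n
  | 0, w => fun p => w ∈ M.V p
  | n + 1, w => ⟨fun p => w ∈ M.V p, (fun t => cW M n '' t) '' M.Sig w⟩

lemma cW_zero_eq_iff (M M' : InqModel P) (w : M.W) (w' : M'.W) :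
    cW M 0 w = cW M' 0 w' ↔ ∀ p, w ∈ M.V p ↔ w' ∈ M'.V p := by
  constructor
  · intro h p
    have := congrFun h p
    simp only [cW] at this
    rw [this]
  · intro h
    funext p
    exact propext (h p)

/-- Extracting a sub-state realizing any subset of the class-image. -/
lemma exists_substate (M : InqModel P) (n : ℕ) (t : Set M.W) (σ : Set (ClassT P n))
    (h : σ ⊆ cW M n '' t) : ∃ t' ⊆ t, cW M n '' t' = σ := by
  refine ⟨{v ∈ t | cW M n v ∈ σ}, fun v hv => hv.1, ?_⟩
  apply Set.Subset.antisymm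
  · rintro α ⟨v, hv, rfl⟩; exact hv.2
  · intro α hα
    obtain ⟨v, hv, rfl⟩ := h hα
    exact ⟨v, ⟨hv, hα⟩, rfl⟩

/-- "Good" class values: those with the closure properties enjoyed by
classes of actual worlds. -/
def GoodClass : (n : ℕ) → ClassT P n → Prop
  | 0, _ => True
  | _ + 1, β => (∅ ∈ β.2) ∧ ∀ σ ∈ β.2, ∀ σ' ⊆ σ, σ' ∈ β.2

lemma goodClass_cW (M : InqModel P) (n : ℕ) (w : M.W) : GoodClass n (cW M n w) := by
  cases n with
  | zero => trivial
  | succ n =>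
    constructor
    · refine ⟨∅, M.Sig_downward w _ (M.Sig_nonempty w).choose_spec ∅ (Set.empty_subset _), by simp⟩
    · rintro σ ⟨t, ht, rfl⟩ σ' hσ'
      obtain ⟨t', ht't, rfl⟩ := exists_substate M n t σ' hσ'
      exact ⟨t', M.Sig_downward w t ht t' ht't, rfl⟩

lemma nbisimW_iff_cW (M M' : InqModel P) :
    ∀ (n : ℕ) (w : M.W) (w' : M'.W), NBisimW M M' n w w' ↔ cW M n w = cW M' n w' := by
  intro n
  induction n with
  | zero => intro w w'; rw [cW_zero_eq_iff]; rfl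
  | succ n ih =>
    have hstate : ∀ (s : Set M.W) (s' : Set M'.W),
        StateRel (NBisimW M M' n) s s' ↔ cW M n '' s = cW M' n '' s' := by
      intro s s'
      constructor
      · rintro ⟨hf, hb⟩
        apply Set.Subset.antisymm
        · rintro α ⟨w, hw, rfl⟩
          obtain ⟨w', hw', hz⟩ := hf w hw
          exact ⟨w', hw', ((ih w w').mp hz).symm⟩
        · rintro α ⟨w', hw', rfl⟩
          obtain ⟨w, hw, hz⟩ := hb w' hw'
          exact ⟨w, hw, (ih w w').mp hz⟩
      · intro h
        constructor
        · intro w hw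
          obtain ⟨w', hw', he⟩ := h ▸ Set.mem_image_of_mem (cW M n) hw
          exact ⟨w', hw', (ih w w').mpr he.symm⟩
        · intro w' hw'
          obtain ⟨w, hw, he⟩ := h.symm ▸ Set.mem_image_of_mem (cW M' n) hw'
          exact ⟨w, hw, (ih w w').mpr he⟩
    intro w w'
    constructor
    · rintro ⟨hp, hf, hb⟩
      show (⟨fun p => w ∈ M.V p, _⟩ : ClassT P (n+1)) = ⟨fun p => w' ∈ M'.V p, _⟩
      have h1 : (fun p => w ∈ M.V p) = fun p => w' ∈ M'.V p := funext fun p => propext (hp p)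
      have h2 : (fun t => cW M n '' t) '' M.Sig w = (fun t => cW M' n '' t) '' M'.Sig w' := by
        apply Set.Subset.antisymm
        · rintro σ ⟨t, ht, rfl⟩
          obtain ⟨t', ht', hrel⟩ := hf t ht
          exact ⟨t', ht', ((hstate t t').mp hrel).symm⟩
        · rintro σ ⟨t', ht', rfl⟩
          obtain ⟨t, ht, hrel⟩ := hb t' ht'
          exact ⟨t, ht, (hstate t t').mp hrel⟩
      rw [h1, h2]
    · intro h
      have h1 := congrArg Prod.fst h
      have h2 := congrArg Prod.snd h
      simp only [cW] at h1 h2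
      refine ⟨fun p => iff_of_eq (congrFun h1 p), ?_, ?_⟩
      · intro t ht
        have : cW M n '' t ∈ (fun t => cW M' n '' t) '' M'.Sig w' := by
          rw [← h2]; exact ⟨t, ht, rfl⟩
        obtain ⟨t', ht', he⟩ := this
        exact ⟨t', ht', (hstate t t').mpr he.symm⟩
      · intro t' ht'
        have : cW M' n '' t' ∈ (fun t => cW M n '' t) '' M.Sig w := by
          rw [h2]; exact ⟨t', ht', rfl⟩
        obtain ⟨t, ht, he⟩ := this
        exact ⟨t, ht, (hstate t t').mpr he⟩

lemma nbisimS_iff_cS (M M' : InqModel P) (n : ℕ) (s : Set M.W) (s' : Set M'.W) :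
    NBisimS M M' n s s' ↔ cW M n '' s = cW M' n '' s' := by
  constructor
  · rintro ⟨hf, hb⟩
    apply Set.Subset.antisymm
    · rintro α ⟨w, hw, rfl⟩
      obtain ⟨w', hw', hz⟩ := hf w hw
      exact ⟨w', hw', ((nbisimW_iff_cW M M' n w w').mp hz).symm⟩
    · rintro α ⟨w', hw', rfl⟩
      obtain ⟨w, hw, hz⟩ := hb w' hw'
      exact ⟨w, hw, (nbisimW_iff_cW M M' n w w').mp hz⟩
  · intro h
    constructor
    · intro w hw
      obtain ⟨w', hw', he⟩ := h ▸ Set.mem_image_of_mem (cW M n) hw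
      exact ⟨w', hw', (nbisimW_iff_cW M M' n w w').mpr he.symm⟩
    · intro w' hw'
      obtain ⟨w, hw, he⟩ := h.symm ▸ Set.mem_image_of_mem (cW M' n) hw'
      exact ⟨w, hw, (nbisimW_iff_cW M M' n w w').mpr he⟩

end Classes
section Forward
variable {P : Type} {M M' : InqModel P}

lemma nbisimW_atoms {n : ℕ} {w : M.W} {w' : M'.W} (h : NBisimW M M' n w w') :
    ∀ p, w ∈ M.V p ↔ w' ∈ M'.V p := by
  cases n with
  | zero => exact h
  | succ n => exact h.1

lemma nbisimW_downgrade : ∀ {n : ℕ} {w : M.W} {w' : M'.W},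
    NBisimW M M' (n + 1) w w' → NBisimW M M' n w w' := by
  intro n
  induction n with
  | zero => intro w w' h; exact h.1
  | succ n ih =>
    rintro w w' ⟨hp, hf, hb⟩
    refine ⟨hp, ?_, ?_⟩
    · intro s hs
      obtain ⟨s', hs', ⟨h1, h2⟩⟩ := hf s hs
      exact ⟨s', hs', fun w hw => (h1 w hw).imp fun w' h => ⟨h.1, ih h.2⟩,
        fun w' hw' => (h2 w' hw').imp fun w h => ⟨h.1, ih h.2⟩⟩
    · intro s' hs'
      obtain ⟨s, hs, ⟨h1, h2⟩⟩ := hb s' hs'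
      exact ⟨s, hs, fun w hw => (h1 w hw).imp fun w' h => ⟨h.1, ih h.2⟩,
        fun w' hw' => (h2 w' hw').imp fun w h => ⟨h.1, ih h.2⟩⟩

lemma nbisimW_add : ∀ (k : ℕ) {m : ℕ} {w : M.W} {w' : M'.W},
    NBisimW M M' (m + k) w w' → NBisimW M M' m w w'
  | 0, _, _, _, h => h
  | k + 1, m, w, w', h => nbisimW_add k (nbisimW_downgrade h)

lemma nbisimW_le {m n : ℕ} (hmn : m ≤ n) {w : M.W} {w' : M'.W}
    (h : NBisimW M M' n w w') : NBisimW M M' m w w' := by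
  obtain ⟨k, rfl⟩ := Nat.exists_eq_add_of_le hmn
  exact nbisimW_add k h

lemma nbisimS_sub_forth {n : ℕ} {s : Set M.W} {s' : Set M'.W}
    (h : NBisimS M M' n s s') {t : Set M.W} (ht : t ⊆ s) :
    ∃ t' ⊆ s', NBisimS M M' n t t' := by
  refine ⟨{w' ∈ s' | ∃ w ∈ t, NBisimW M M' n w w'}, fun w' hw' => hw'.1, ?_, ?_⟩
  · intro w hw
    obtain ⟨w', hw', hz⟩ := h.1 w (ht hw)
    exact ⟨w', ⟨hw', w, hw, hz⟩, hz⟩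
  · rintro w' ⟨_, w, hw, hz⟩
    exact ⟨w, hw, hz⟩

lemma nbisimS_sub_back {n : ℕ} {s : Set M.W} {s' : Set M'.W}
    (h : NBisimS M M' n s s') {t' : Set M'.W} (ht' : t' ⊆ s') :
    ∃ t ⊆ s, NBisimS M M' n t t' := by
  refine ⟨{w ∈ s | ∃ w' ∈ t', NBisimW M M' n w w'}, fun w hw => hw.1, ?_, ?_⟩
  · rintro w ⟨_, w', hw', hz⟩
    exact ⟨w', hw', hz⟩
  · intro w' hw'
    obtain ⟨w, hw, hz⟩ := h.2 w' (ht' hw')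
    exact ⟨w, ⟨hw, w', hw', hz⟩, hz⟩

lemma nbisimS_sigma {n : ℕ} {w : M.W} {w' : M'.W} (h : NBisimW M M' (n + 1) w w') :
    NBisimS M M' n (M.sigma w) (M'.sigma w') := by
  obtain ⟨_, hf, hb⟩ := h
  constructor
  · rintro v ⟨t, ht, hv⟩
    obtain ⟨t', ht', hrel⟩ := hf t ht
    obtain ⟨v', hv', hz⟩ := hrel.1 v hv
    exact ⟨v', ⟨t', ht', hv'⟩, hz⟩
  · rintro v' ⟨t', ht', hv'⟩
    obtain ⟨t, ht, hrel⟩ := hb t' ht'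
    obtain ⟨v, hv, hz⟩ := hrel.2 v' hv'
    exact ⟨v, ⟨t, ht, hv⟩, hz⟩

lemma forward_EF : ∀ (φ : InqForm P) (n : ℕ) (s : Set M.W) (s' : Set M'.W),
    mdepth φ ≤ n → NBisimS M M' n s s' → (support M φ s ↔ support M' φ s') := by
  intro φ
  induction φ with
  | atom p =>
    intro n s s' _ h
    constructor
    · intro hs w' hw'
      obtain ⟨w, hw, hz⟩ := h.2 w' hw'
      exact (nbisimW_atoms hz p).mp (hs hw)
    · intro hs' w hw
      obtain ⟨w', hw', hz⟩ := h.1 w hw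
      exact (nbisimW_atoms hz p).mpr (hs' hw')
  | bot =>
    intro n s s' _ h
    show s = ∅ ↔ s' = ∅
    constructor
    · intro hs
      rw [Set.eq_empty_iff_forall_notMem] at hs ⊢
      intro w' hw'
      obtain ⟨w, hw, _⟩ := h.2 w' hw'
      exact hs w hw
    · intro hs'
      rw [Set.eq_empty_iff_forall_notMem] at hs' ⊢
      intro w hw
      obtain ⟨w', hw', _⟩ := h.1 w hw
      exact hs' w' hw'
  | and φ ψ ihφ ihψ =>
    intro n s s' hd h
    have h1 := ihφ n s s' (le_trans (le_max_left _ _) hd) h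
    have h2 := ihψ n s s' (le_trans (le_max_right _ _) hd) h
    exact and_congr h1 h2
  | impl φ ψ ihφ ihψ =>
    intro n s s' hd h
    have dφ := le_trans (le_max_left _ _) hd
    have dψ := le_trans (le_max_right _ _) hd
    constructor
    · intro hs t' ht' hφ'
      obtain ⟨t, hts, hrel⟩ := nbisimS_sub_back h ht'
      exact (ihψ n t t' dψ hrel).mp (hs t hts ((ihφ n t t' dφ hrel).mpr hφ'))
    · intro hs' t hts hφ
      obtain ⟨t', ht', hrel⟩ := nbisimS_sub_forth h hts
      exact (ihψ n t t' dψ hrel).mpr (hs' t' ht' ((ihφ n t t' dφ hrel).mp hφ))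
  | idisj φ ψ ihφ ihψ =>
    intro n s s' hd h
    exact or_congr (ihφ n s s' (le_trans (le_max_left _ _) hd) h)
      (ihψ n s s' (le_trans (le_max_right _ _) hd) h)
  | box φ ih =>
    intro n s s' hd h
    have hd' : mdepth φ + 1 ≤ n := hd
    constructor
    · intro hs w' hw'
      obtain ⟨w, hw, hz⟩ := h.2 w' hw'
      have hz' := nbisimW_le hd' hz
      exact (ih (mdepth φ) _ _ le_rfl (nbisimS_sigma hz')).mp (hs w hw)
    · intro hs' w hw
      obtain ⟨w', hw', hz⟩ := h.1 w hw
      have hz' := nbisimW_le hd' hz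
      exact (ih (mdepth φ) _ _ le_rfl (nbisimS_sigma hz')).mpr (hs' w' hw')
  | boxplus φ ih =>
    intro n s s' hd h
    have hd' : mdepth φ + 1 ≤ n := hd
    constructor
    · intro hs w' hw' t' ht'
      obtain ⟨w, hw, hz⟩ := h.2 w' hw'
      obtain ⟨_, _, hb⟩ := nbisimW_le hd' hz
      obtain ⟨t, ht, hrel⟩ := hb t' ht'
      exact (ih (mdepth φ) t t' le_rfl hrel).mp (hs w hw t ht)
    · intro hs' w hw t ht
      obtain ⟨w', hw', hz⟩ := h.1 w hw
      obtain ⟨_, hf, _⟩ := nbisimW_le hd' hz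
      obtain ⟨t', ht', hrel⟩ := hf t ht
      exact (ih (mdepth φ) t t' le_rfl hrel).mpr (hs' w' hw' t' ht')

end Forward
section CharFormulas
variable {P : Type}

/-- Existence of characteristic formulas for good world-classes. -/
def DStatement (P : Type) (n : ℕ) : Prop :=
  ∃ δf : ClassT P n → InqForm P, ∀ β : ClassT P n, GoodClass n β →
    mdepth (δf β) ≤ n ∧ ∀ (N : InqModel P) (s : Set N.W),
      support N (δf β) s ↔ ∀ w ∈ s, cW N n w = β

/-- Existence of formulas expressing that all worlds of a state have class in `S`. -/
def CStatement (P : Type) (n : ℕ) : Prop :=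
  ∃ χf : Set (ClassT P n) → InqForm P, ∀ S : Set (ClassT P n),
    mdepth (χf S) ≤ n ∧ ∀ (N : InqModel P) (s : Set N.W),
      support N (χf S) s ↔ ∀ w ∈ s, cW N n w ∈ S

lemma support_atom_singleton (N : InqModel P) (p : P) (w : N.W) :
    support N (.atom p) {w} ↔ w ∈ N.V p := by
  show {w} ⊆ N.V p ↔ _
  exact Set.singleton_subset_iff

lemma charD_zero [Finite P] : DStatement P 0 := by
  classical
  have : Fintype P := Fintype.ofFinite P
  refine ⟨fun β => landList ((Finset.univ.toList).map
    (fun p => if β p then .atom p else (InqForm.atom p).neg)), ?_⟩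
  intro β _
  constructor
  · apply mdepth_landList
    intro φ hφ
    simp only [List.mem_map] at hφ
    obtain ⟨p, _, rfl⟩ := hφ
    split <;> simp [mdepth, mdepth_neg]
  · intro N s
    rw [support_landList]
    constructor
    · intro h w hw
      funext p
      have hp := h _ (List.mem_map.mpr ⟨p, by simp, rfl⟩)
      show (w ∈ N.V p) = β p
      by_cases hb : β p
      · rw [if_pos hb] at hp
        exact propext ⟨fun _ => hb, fun _ => hp hw⟩
      · rw [if_neg hb] at hp
        have hnp := (support_neg N _ s).mp hp w hw
        rw [support_atom_singleton] at hnp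
        exact propext ⟨fun hv => absurd hv hnp, fun hb' => absurd hb' hb⟩
    · intro h φ hφ
      simp only [List.mem_map] at hφ
      obtain ⟨p, _, rfl⟩ := hφ
      by_cases hb : β p
      · rw [if_pos hb]
        intro w hw
        have := congrFun (h w hw) p
        show w ∈ N.V p
        rw [show (w ∈ N.V p) = β p from this]
        exact hb
      · rw [if_neg hb]
        rw [support_neg]
        intro w hw
        rw [support_atom_singleton]
        intro hv
        exact hb (congrFun (h w hw) p ▸ hv)

lemma charC_of_charD [Finite P] {n : ℕ} (hD : DStatement P n) : CStatement P n := by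
  classical
  obtain ⟨δf, hδ⟩ := hD
  refine ⟨fun S => landList (((Set.toFinite {β | GoodClass n β ∧ β ∉ S}).toFinset.toList).map
    (fun β => (δf β).neg)), ?_⟩
  intro S
  constructor
  · apply mdepth_landList
    intro φ hφ
    simp only [List.mem_map, Finset.mem_toList, Set.Finite.mem_toFinset, Set.mem_setOf_eq] at hφ
    obtain ⟨β, hβ, rfl⟩ := hφ
    rw [mdepth_neg]
    exact (hδ β hβ.1).1
  · intro N s
    rw [support_landList]
    constructor
    · intro h w hw
      by_contra hnS
      have hmem : (δf (cW N n w)).neg ∈ ((Set.toFinite {β | GoodClass n β ∧ β ∉ S}).toFinset.toList).map (fun β => (δf β).neg) :=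
        List.mem_map.mpr ⟨cW N n w, by
          simp only [Finset.mem_toList, Set.Finite.mem_toFinset, Set.mem_setOf_eq]
          exact ⟨goodClass_cW N n w, hnS⟩, rfl⟩
      have hneg := (support_neg N _ s).mp (h _ hmem) w hw
      exact hneg (((hδ _ (goodClass_cW N n w)).2 N {w}).mpr
        (fun v hv => by rw [Set.eq_of_mem_singleton hv]))
    · intro h φ hφ
      simp only [List.mem_map, Finset.mem_toList, Set.Finite.mem_toFinset, Set.mem_setOf_eq] at hφ
      obtain ⟨β, ⟨hgood, hβS⟩, rfl⟩ := hφ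
      rw [support_neg]
      intro w hw hsup
      have heq := ((hδ β hgood).2 N {w}).mp hsup w (Set.mem_singleton w)
      exact hβS (heq ▸ h w hw)

end CharFormulas
section CharSucc
variable {P : Type}

lemma charD_succ [Finite P] {n : ℕ} (hD0 : DStatement P 0) (hC : CStatement P n) :
    DStatement P (n + 1) := by
  classical
  obtain ⟨δ0, hδ0⟩ := hD0
  obtain ⟨χf, hχ⟩ := hC
  refine ⟨fun β =>
    .and (δ0 β.1)
      (.and (.boxplus (lorList (((Set.toFinite β.2).toFinset.toList).map χf)))
        (landList (((Set.toFinite β.2).toFinset.toList).map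
          (fun σ => if σ = (∅ : Set (ClassT P n)) then InqForm.top
            else (InqForm.boxplus (lorList (((Set.toFinite σ).toFinset.toList).map
              (fun α => χf {α}ᶜ)))).neg)))), ?_⟩
  rintro ⟨π, 𝒮⟩ ⟨hempty, hdown⟩
  have hδ0π := hδ0 π trivial
  constructor
  · -- modal depth bound
    refine max_le (hδ0π.1.trans (Nat.zero_le _)) (max_le ?_ ?_)
    · show mdepth (lorList _) + 1 ≤ n + 1
      refine Nat.succ_le_succ (mdepth_lorList ?_)
      intro φ hφ
      simp only [List.mem_map] at hφ
      obtain ⟨σ, _, rfl⟩ := hφ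
      exact (hχ σ).1
    · refine mdepth_landList ?_
      intro φ hφ
      simp only [List.mem_map] at hφ
      obtain ⟨σ, _, rfl⟩ := hφ
      by_cases hσ : σ = (∅ : Set (ClassT P n))
      · rw [if_pos hσ]; simp [InqForm.top, mdepth]
      · rw [if_neg hσ, mdepth_neg]
        show mdepth (lorList _) + 1 ≤ n + 1
        refine Nat.succ_le_succ (mdepth_lorList ?_)
        intro φ hφ
        simp only [List.mem_map] at hφ
        obtain ⟨α, _, rfl⟩ := hφ
        exact (hχ _).1
  · intro N s
    -- support of the big disjunction at a state
    have hBt : ∀ t : Set N.W,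
        support N (lorList (((Set.toFinite 𝒮).toFinset.toList).map χf)) t ↔ cW N n '' t ∈ 𝒮 := by
      intro t
      rw [support_lorList]
      constructor
      · rintro (rfl | ⟨φ, hφ, hsup⟩)
        · rw [Set.image_empty]; exact hempty
        · simp only [List.mem_map, Finset.mem_toList, Set.Finite.mem_toFinset] at hφ
          obtain ⟨σ, hσ, rfl⟩ := hφ
          refine hdown σ hσ _ ?_
          rintro α ⟨v, hv, rfl⟩
          exact ((hχ σ).2 N t).mp hsup v hv
      · intro hmem
        refine Or.inr ⟨χf (cW N n '' t), List.mem_map.mpr ⟨_, by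
          simp only [Finset.mem_toList, Set.Finite.mem_toFinset]; exact hmem, rfl⟩, ?_⟩
        exact ((hχ _).2 N t).mpr (fun v hv => Set.mem_image_of_mem _ hv)
    -- the existential part: truth of the ε-formulas
    have hEps : ∀ σ : Set (ClassT P n), σ ≠ ∅ → ∀ w : N.W,
        ¬ support N (.boxplus (lorList (((Set.toFinite σ).toFinset.toList).map
            (fun α => χf {α}ᶜ)))) {w}
        ↔ ∃ t ∈ N.Sig w, σ ⊆ cW N n '' t := by
      intro σ hσne w
      have hθ : ∀ t : Set N.W,
          support N (lorList (((Set.toFinite σ).toFinset.toList).map (fun α => χf {α}ᶜ))) t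
          ↔ (t = ∅ ∨ ∃ α ∈ σ, α ∉ cW N n '' t) := by
        intro t
        rw [support_lorList]
        apply or_congr Iff.rfl
        constructor
        · rintro ⟨φ, hφ, hsup⟩
          simp only [List.mem_map, Finset.mem_toList, Set.Finite.mem_toFinset] at hφ
          obtain ⟨α, hα, rfl⟩ := hφ
          refine ⟨α, hα, ?_⟩
          rintro ⟨v, hv, rfl⟩
          exact ((hχ _).2 N t).mp hsup v hv rfl
        · rintro ⟨α, hα, hnot⟩
          refine ⟨χf {α}ᶜ, List.mem_map.mpr ⟨α, by
            simp only [Finset.mem_toList, Set.Finite.mem_toFinset]; exact hα, rfl⟩, ?_⟩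
          exact ((hχ _).2 N t).mpr (fun v hv hv' => hnot (hv' ▸ Set.mem_image_of_mem _ hv))
      have hbp : support N (.boxplus (lorList (((Set.toFinite σ).toFinset.toList).map
            (fun α => χf {α}ᶜ)))) {w}
          ↔ ∀ t ∈ N.Sig w, t = ∅ ∨ ∃ α ∈ σ, α ∉ cW N n '' t := by
        constructor
        · intro h t ht
          exact (hθ t).mp (h w (Set.mem_singleton w) t ht)
        · intro h v hv t ht
          rw [Set.eq_of_mem_singleton hv] at ht
          exact (hθ t).mpr (h t ht)
      rw [hbp]
      push_neg
      constructor
      · rintro ⟨t, ht, hne, hall⟩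
        exact ⟨t, ht, fun α hα => hall α hα⟩
      · rintro ⟨t, ht, hsub⟩
        obtain ⟨α, hα⟩ := Set.nonempty_iff_ne_empty.mpr hσne
        refine ⟨t, ht, ?_, fun α hα' => hsub hα'⟩
        obtain ⟨v, hv, _⟩ := hsub hα
        exact ⟨v, hv⟩
    -- now the main equivalence
    show support N (δ0 π) s ∧ _ ∧ support N (landList _) s ↔ _
    rw [(hδ0π.2 N s), support_landList]
    constructor
    · rintro ⟨hA, hB, hCc⟩ w hw
      have h1 : (fun p => w ∈ N.V p) = π := hA w hw
      have h2 : (fun t => cW N n '' t) '' N.Sig w = 𝒮 := by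
        apply Set.Subset.antisymm
        · rintro σ ⟨t, ht, rfl⟩
          exact (hBt t).mp (hB w hw t ht)
        · intro σ hσ
          by_cases hσe : σ = (∅ : Set (ClassT P n))
          · subst hσe
            obtain ⟨t, ht⟩ := N.Sig_nonempty w
            exact ⟨∅, N.Sig_downward w t ht ∅ (Set.empty_subset t), Set.image_empty _⟩
          · have hmem : (InqForm.boxplus (lorList (((Set.toFinite σ).toFinset.toList).map
                (fun α => χf {α}ᶜ)))).neg ∈ ((Set.toFinite 𝒮).toFinset.toList).map
                (fun σ => if σ = (∅ : Set (ClassT P n)) then InqForm.top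
                  else (InqForm.boxplus (lorList (((Set.toFinite σ).toFinset.toList).map
                    (fun α => χf {α}ᶜ)))).neg) := by
              refine List.mem_map.mpr ⟨σ, by
                simp only [Finset.mem_toList, Set.Finite.mem_toFinset]; exact hσ, ?_⟩
              rw [if_neg hσe]
            have hnegsup := (support_neg N _ s).mp (hCc _ hmem) w hw
            obtain ⟨t, ht, hsub⟩ := (hEps σ hσe w).mp hnegsup
            obtain ⟨t', ht't, himg⟩ := exists_substate N n t σ hsub
            exact ⟨t', N.Sig_downward w t ht t' ht't, himg⟩
      show cW N (n + 1) w = (π, 𝒮)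
      show (⟨fun p => w ∈ N.V p, (fun t => cW N n '' t) '' N.Sig w⟩ : ClassT P (n + 1)) = (π, 𝒮)
      rw [h1, h2]
    · intro h
      have hfst : ∀ w ∈ s, (fun p => w ∈ N.V p) = π := by
        intro w hw
        exact congrArg Prod.fst (h w hw)
      have hsnd : ∀ w ∈ s, (fun t => cW N n '' t) '' N.Sig w = 𝒮 := by
        intro w hw
        exact congrArg Prod.snd (h w hw)
      refine ⟨hfst, ?_, ?_⟩
      · intro w hw t ht
        exact (hBt t).mpr ((hsnd w hw) ▸ ⟨t, ht, rfl⟩)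
      · intro φ hφ
        simp only [List.mem_map, Finset.mem_toList, Set.Finite.mem_toFinset] at hφ
        obtain ⟨σ, hσ, rfl⟩ := hφ
        by_cases hσe : σ = (∅ : Set (ClassT P n))
        · rw [if_pos hσe]; exact support_top N s
        · rw [if_neg hσe, support_neg]
          intro w hw
          rw [hEps σ hσe w]
          have : σ ∈ (fun t => cW N n '' t) '' N.Sig w := (hsnd w hw) ▸ hσ
          obtain ⟨t, ht, rfl⟩ := this
          exact ⟨t, ht, Set.Subset.rfl⟩


/-- Characteristic χ-formulas exist at every level. -/
lemma charC_all (P : Type) [Finite P] : ∀ n, CStatement P n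
  | 0 => charC_of_charD charD_zero
  | n + 1 => charC_of_charD (charD_succ charD_zero (charC_all P n))

end CharSucc

/-- **Inquisitive Ehrenfeucht–Fraïssé theorem**: over a finite set of atomic
propositions, `n`-bisimilarity of state-pointed models coincides with
indistinguishability by InqML formulas of modal depth at most `n`. -/
theorem inquisitive_EF {P : Type} [Finite P] (n : ℕ) (M M' : InqModel P)
    (s : Set M.W) (s' : Set M'.W) :
    NBisimS M M' n s s' ↔
      ∀ φ : InqForm P, mdepth φ ≤ n → (support M φ s ↔ support M' φ s') := by
  constructor
  · intro h φ hd
    exact forward_EF φ n s s' hd h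
  · intro h
    obtain ⟨χf, hχ⟩ := charC_all P n
    rw [nbisimS_iff_cS]
    apply Set.Subset.antisymm
    · rintro α ⟨w, hw, rfl⟩
      have h1 : support M' (χf (cW M' n '' s')) s' :=
        ((hχ _).2 M' s').mpr (fun w' hw' => Set.mem_image_of_mem _ hw')
      exact ((hχ _).2 M s).mp ((h _ (hχ _).1).mpr h1) w hw
    · rintro α ⟨w', hw', rfl⟩
      have h1 : support M (χf (cW M n '' s)) s :=
        ((hχ _).2 M s).mpr (fun w hw => Set.mem_image_of_mem _ hw)
      exact ((hχ _).2 M' s').mp ((h _ (hχ _).1).mp h1) w' hw'
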